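/- arXiv:1212.6074 — 2 statements merged into one kernel-verified Lean document; each statement's English description precedes it below -/
import Mathlib

section
/- Let M, N, K be positive integers with K ≥ 2 and N < (K−1)M+1. Then for every real r with 0 ≤ r ≤ N/K, the supremum over tuples (D_1,…,D_K) of reals with 0 ≤ D_i ≤ M for each i and D_1+⋯+D_K ≤ min(N,KM), of the minimum over nonempty subsets A ⊆ {1,…,K} of d^{D_A}_{|A|M,N}(|A|·r) (where D_A = Σ_{a∈A} D_a), equals M·N − K·M·r. -/
/-- The index `l` of the interval of average dimensions per channel use `D`
to which `D` belongs: the smallest `l` with `D ≤ (MN − l(l+1))/(N+M−1−2l)`. -/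
noncomputable def lIdx (M N : ℕ) (D : ℝ) : ℕ :=
  sInf {l : ℕ |
    D ≤ ((M : ℝ) * (N : ℝ) - (l : ℝ) * ((l : ℝ) + 1)) /
        ((N : ℝ) + (M : ℝ) - 1 - 2 * (l : ℝ))}

/-- The upper bound `d^{D}_{M,N}(r)` on the DMT of infinite constellations with
`D` average dimensions per channel use, in a point-to-point channel with `M`
transmit and `N` receive antennas.  It vanishes for `r ≥ D` or `D = 0`, and for
`0 ≤ r < D` it is the straight line `((M−l)(N−l)/(D−l))·(D−r)` where `l = lIdx M N D`
is determined by the interval of `D`. -/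
noncomputable def dIC (M N : ℕ) (D r : ℝ) : ℝ :=
  if D ≤ 0 ∨ D ≤ r then 0
  else
    (((M : ℝ) - (lIdx M N D : ℝ)) * ((N : ℝ) - (lIdx M N D : ℝ)) /
        (D - (lIdx M N D : ℝ))) * (D - r)

/-- The optimal point-to-point DMT `d^{FC}_{M,N}(r)` of finite constellations:
the piecewise linear function through the points `(l, (M−l)(N−l))`. -/
noncomputable def dFC (M N : ℕ) (r : ℝ) : ℝ :=
  ((M : ℝ) - (⌊r⌋ : ℝ)) * ((N : ℝ) - (⌊r⌋ : ℝ))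
    + (r - (⌊r⌋ : ℝ)) *
      (((M : ℝ) - (⌊r⌋ : ℝ) - 1) * ((N : ℝ) - (⌊r⌋ : ℝ) - 1)
        - ((M : ℝ) - (⌊r⌋ : ℝ)) * ((N : ℝ) - (⌊r⌋ : ℝ)))

/-- The optimal symmetric multiple-access DMT `d^{FC}_{K,M,N}(r)` of finite
constellations: it equals `d^{FC}_{M,N}(r)` for `r ≤ min(N/(K+1), M)` and
`d^{FC}_{KM,N}(K·r)` afterwards. -/
noncomputable def dFCmac (K M N : ℕ) (r : ℝ) : ℝ :=
  if r ≤ min ((N : ℝ) / ((K : ℝ) + 1)) (M : ℝ) then dFC M N r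
  else dFC (K * M) N ((K : ℝ) * r)

lemma lIdx_eq_zero (m n : ℕ) (D : ℝ)
    (h : D ≤ (m:ℝ)*(n:ℝ)/((n:ℝ)+(m:ℝ)-1)) : lIdx m n D = 0 := by
  rw [lIdx, Nat.sInf_eq_zero]
  left
  simpa using h
lemma lIdx_facts (m n : ℕ) (D : ℝ) (hm : 1 ≤ m) (hn : 1 ≤ n) (hD0 : 0 < D)
    (hDm : D ≤ (m:ℝ)) (hDn : D ≤ (n:ℝ)) :
    lIdx m n D + 1 ≤ min m n ∧ (lIdx m n D : ℝ) < D := by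
  set P := {l : ℕ |
    D ≤ ((m : ℝ) * (n : ℝ) - (l : ℝ) * ((l : ℝ) + 1)) /
        ((n : ℝ) + (m : ℝ) - 1 - 2 * (l : ℝ))} with hP
  have hminm : 1 ≤ min m n := le_min hm hn
  have hj₀ : (min m n - 1) ∈ P := by
    have hc : ((min m n - 1 : ℕ) : ℝ) = (min m n : ℝ) - 1 := by
      push_cast [Nat.cast_sub hminm]; ring
    simp only [hP, Set.mem_setOf_eq, hc]
    rcases le_total m n with hmn | hmn
    · have hcm : (min m n : ℝ) = (m:ℝ) := by norm_cast; omega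
      rw [hcm]
      have hden : (0:ℝ) < (n:ℝ) + m - 1 - 2*((m:ℝ)-1) := by
        have : (m:ℝ) ≤ n := by exact_mod_cast hmn
        linarith [show (1:ℝ) ≤ (m:ℝ) by exact_mod_cast hm]
      rw [le_div_iff₀ hden]
      nlinarith [hDm]
    · have hcm : (min m n : ℝ) = (n:ℝ) := by norm_cast; omega
      rw [hcm]
      have hden : (0:ℝ) < (n:ℝ) + m - 1 - 2*((n:ℝ)-1) := by
        have : (n:ℝ) ≤ m := by exact_mod_cast hmn
        linarith [show (1:ℝ) ≤ (n:ℝ) by exact_mod_cast hn]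
      rw [le_div_iff₀ hden]
      nlinarith [hDn]
  have hPne : P.Nonempty := ⟨_, hj₀⟩
  have hle : lIdx m n D ≤ min m n - 1 := Nat.sInf_le hj₀
  have h1 : lIdx m n D + 1 ≤ min m n := by omega
  refine ⟨h1, ?_⟩
  set l := lIdx m n D with hl
  rcases Nat.eq_zero_or_pos l with h0 | hpos
  · rw [h0]; exact_mod_cast hD0
  · have hmem : l ∈ P := Nat.sInf_mem hPne
    have hnot : l - 1 ∉ P := by
      intro h
      have h2 : l ≤ l - 1 := Nat.sInf_le h
      omega
    have hcast : ((l - 1 : ℕ) : ℝ) = (l:ℝ) - 1 := by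
      push_cast [Nat.cast_sub hpos]; ring
    have hlmin : (2:ℝ) * l ≤ (n:ℝ) + m - 2 := by
      have h2 : 2 * l ≤ n + m - 2 := by omega
      have := (Nat.cast_le (α := ℝ)).2 h2
      push_cast [Nat.cast_sub (show 2 ≤ n + m by omega)] at this
      linarith
    have hden : (0:ℝ) < (n:ℝ) + m - 1 - 2*(l:ℝ) := by linarith
    have hden1 : (0:ℝ) < (n:ℝ) + m - 1 - 2*((l:ℝ)-1) := by linarith
    have hmem' : D * ((n:ℝ) + m - 1 - 2*(l:ℝ)) ≤ (m:ℝ)*n - (l:ℝ)*((l:ℝ)+1) := by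
      have := hmem
      simp only [hP, Set.mem_setOf_eq] at this
      exact (le_div_iff₀ hden).1 this
    have hnot' : (m:ℝ)*n - ((l:ℝ)-1)*(((l:ℝ)-1)+1) < D * ((n:ℝ) + m - 1 - 2*((l:ℝ)-1)) := by
      have := hnot
      simp only [hP, Set.mem_setOf_eq, not_le, hcast] at this
      exact (div_lt_iff₀ hden1).1 this
    nlinarith [hmem', hnot']
lemma key (M N K k x : ℝ) (hN1 : 1 ≤ N) (hk1 : 1 ≤ k) (hkK : k ≤ K) (hK2 : 2 ≤ K)
    (hNK : N ≤ (K-1)*M) (hx0 : 0 ≤ x) (hxN : x ≤ N - 1) (hxD : K*x ≤ k*N)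
    (hM0 : 0 ≤ M) :
    M*(k*N - K*x) ≤ k*((k*M - x)*(N - x)) := by
  have hNx : (0:ℝ) ≤ N - x := by linarith
  have hk0 : (0:ℝ) ≤ k := by linarith
  have hKk : (0:ℝ) ≤ K - k := by linarith
  have hKMN : (0:ℝ) ≤ (K-1)*M - N := by linarith
  rcases le_or_gt x ((k-1)*M) with hA | hB
  · nlinarith [mul_nonneg (mul_nonneg hk0 hNx) (by linarith : (0:ℝ) ≤ (k-1)*M - x),
      mul_nonneg (mul_nonneg hM0 hKk) hx0]
  · rcases le_or_gt ((K-1)*x) ((k-1)*N) with hB1 | hB2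
    · have haux : 0 ≤ (K-1) * (k*((k*M - x)*(N - x)) - M*(k*N - K*x)) := by
        nlinarith [mul_nonneg (mul_nonneg (mul_nonneg hk0 (by linarith : (0:ℝ) ≤ k-1)) hNx) hKMN,
          mul_nonneg (mul_nonneg hk0 hNx) (by linarith : (0:ℝ) ≤ (k-1)*N - (K-1)*x),
          mul_nonneg (mul_nonneg (mul_nonneg (by linarith : (0:ℝ) ≤ K-1) hM0) hKk) hx0]
      nlinarith [haux]
    · have haux : 0 ≤ (K-1) * (k*((k*M - x)*(N - x)) - M*(k*N - K*x)) := by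
        nlinarith [mul_nonneg (mul_nonneg (mul_nonneg hk0 (by linarith : (0:ℝ) ≤ k-1)) hNx) hKMN,
          mul_nonneg (mul_nonneg hk0 hx0) (by linarith : (0:ℝ) ≤ (K-1)*x - (k-1)*N),
          mul_nonneg (mul_nonneg hKMN hKk) hx0,
          mul_nonneg (mul_nonneg (by linarith : (0:ℝ) ≤ N) (by linarith : (0:ℝ) ≤ k-1)) (by linarith : (0:ℝ) ≤ k*N - K*x)]
      nlinarith [haux]

lemma NK_le (M N K : ℕ) (hM : 0 < M) (hN : 0 < N) (hK : 0 < K)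
    (hNK : (N:ℝ) ≤ ((K:ℝ)-1)*(M:ℝ)) :
    (N:ℝ)/(K:ℝ) ≤ (M:ℝ)*(N:ℝ)/((N:ℝ)+(M:ℝ)-1) := by
  have hM1 : (1:ℝ) ≤ M := by exact_mod_cast hM
  have hN1 : (1:ℝ) ≤ N := by exact_mod_cast hN
  have hK1 : (1:ℝ) ≤ K := by exact_mod_cast hK
  have hd1 : (0:ℝ) < (N:ℝ)+(M:ℝ)-1 := by linarith
  have hK0 : (0:ℝ) < K := by linarith
  rw [div_le_div_iff₀ hK0 hd1]
  nlinarith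

lemma single_ub (M N K : ℕ) (hM : 0 < M) (hN : 0 < N) (hK : 0 < K)
    (hNK : (N:ℝ) ≤ ((K:ℝ)-1)*(M:ℝ)) (r D₀ : ℝ) (hr0 : 0 ≤ r)
    (hle : D₀ ≤ (N:ℝ)/K) (hT0 : 0 ≤ (M:ℝ)*N - K*M*r) :
    dIC M N D₀ r ≤ (M:ℝ)*N - (K:ℝ)*M*r := by
  rw [dIC]
  split
  · exact hT0
  · rename_i hcond
    push_neg at hcond
    obtain ⟨hD0, hrD⟩ := hcond
    have hK0 : (0:ℝ) < K := by exact_mod_cast hK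
    have hl0 : lIdx M N D₀ = 0 :=
      lIdx_eq_zero M N D₀ (hle.trans (NK_le M N K hM hN hK hNK))
    rw [hl0]
    have hKD : (K:ℝ)*D₀ ≤ N := by
      rw [le_div_iff₀ hK0] at hle; linarith
    have hM0 : (0:ℝ) ≤ M := by positivity
    simp only [Nat.cast_zero, sub_zero]
    rw [div_mul_eq_mul_div, div_le_iff₀ hD0]
    nlinarith [mul_nonneg (mul_nonneg hM0 hr0) (sub_nonneg.2 hKD)]

lemma single_eq (M N K : ℕ) (hM : 0 < M) (hN : 0 < N) (hK : 0 < K)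
    (hNK : (N:ℝ) ≤ ((K:ℝ)-1)*(M:ℝ)) (r : ℝ) (hr0 : 0 ≤ r)
    (hrN : r ≤ (N:ℝ)/K) :
    dIC M N ((N:ℝ)/K) r = (M:ℝ)*N - (K:ℝ)*M*r := by
  have hK0 : (0:ℝ) < K := by exact_mod_cast hK
  have hKne : (K:ℝ) ≠ 0 := ne_of_gt hK0
  have hN0 : (0:ℝ) < N := by exact_mod_cast hN
  have hD0 : (0:ℝ) < (N:ℝ)/K := by positivity
  rcases eq_or_lt_of_le hrN with heq | hlt
  · rw [dIC, if_pos (Or.inr heq.ge), heq]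
    field_simp
    ring
  · rw [dIC, if_neg (by push_neg; exact ⟨hD0, hlt⟩)]
    have hl0 : lIdx M N ((N:ℝ)/K) = 0 :=
      lIdx_eq_zero M N _ (NK_le M N K hM hN hK hNK)
    rw [hl0]
    simp only [Nat.cast_zero, sub_zero]
    field_simp

lemma main_lb (M N K k : ℕ) (hM : 0 < M) (hN : 0 < N) (hK : 2 ≤ K)
    (hk1 : 1 ≤ k) (hkK : k ≤ K) (hNK : (N:ℝ) ≤ ((K:ℝ)-1)*(M:ℝ))
    (r : ℝ) (hr0 : 0 ≤ r) (hrN : r ≤ (N:ℝ)/K) :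
    (M:ℝ)*N - (K:ℝ)*M*r ≤ dIC (k*M) N ((k:ℝ)*((N:ℝ)/K)) ((k:ℝ)*r) := by
  have hK0 : (0:ℝ) < K := by positivity
  have hKne : (K:ℝ) ≠ 0 := ne_of_gt hK0
  have hN0 : (0:ℝ) < N := by exact_mod_cast hN
  have hM1 : (1:ℝ) ≤ M := by exact_mod_cast hM
  have hN1 : (1:ℝ) ≤ N := by exact_mod_cast hN
  have hk1' : (1:ℝ) ≤ k := by exact_mod_cast hk1
  have hkK' : (k:ℝ) ≤ K := by exact_mod_cast hkK
  have hK2 : (2:ℝ) ≤ K := by exact_mod_cast hK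
  have hq0 : (0:ℝ) < (N:ℝ)/K := by positivity
  have hKq : (K:ℝ)*((N:ℝ)/K) = N := by field_simp
  rcases eq_or_lt_of_le hrN with heq | hlt
  · rw [dIC, if_pos (Or.inr (by rw [heq]))]
    nlinarith [hKq]
  · have hD0 : (0:ℝ) < (k:ℝ)*((N:ℝ)/K) := by positivity
    have hDr : (k:ℝ)*r < (k:ℝ)*((N:ℝ)/K) :=
      mul_lt_mul_of_pos_left hlt (by linarith)
    rw [dIC, if_neg (by push_neg; exact ⟨hD0, hDr⟩)]
    have hDm : (k:ℝ)*((N:ℝ)/K) ≤ ((k*M : ℕ):ℝ) := by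
      push_cast
      have h1 : (N:ℝ)/K ≤ M := by
        rw [div_le_iff₀ hK0]; nlinarith
      nlinarith
    have hDn : (k:ℝ)*((N:ℝ)/K) ≤ (N:ℝ) := by
      rw [mul_div_assoc', div_le_iff₀ hK0]
      nlinarith
    obtain ⟨hlmin, hlD⟩ := lIdx_facts (k*M) N ((k:ℝ)*((N:ℝ)/K))
      (Nat.mul_pos (by omega) hM) hN hD0 hDm hDn
    set l := lIdx (k*M) N ((k:ℝ)*((N:ℝ)/K)) with hldef
    have hlN : (l:ℝ) ≤ (N:ℝ) - 1 := by
      have h2 : l + 1 ≤ N := le_trans hlmin (min_le_right _ _)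
      have h3 := (Nat.cast_le (α := ℝ)).2 h2
      push_cast at h3; linarith
    have hl0 : (0:ℝ) ≤ l := Nat.cast_nonneg l
    have hxD : (K:ℝ)*l ≤ (k:ℝ)*N := by
      have h2 : (K:ℝ)*l ≤ K*((k:ℝ)*((N:ℝ)/K)) :=
        mul_le_mul_of_nonneg_left hlD.le (by linarith)
      calc (K:ℝ)*l ≤ K*((k:ℝ)*((N:ℝ)/K)) := h2
        _ = (k:ℝ)*N := by field_simp
    have hkey := key (M:ℝ) (N:ℝ) (K:ℝ) (k:ℝ) (l:ℝ) hN1 hk1' hkK' hK2 hNK hl0 hlN hxD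
      (by positivity)
    have hd : (0:ℝ) < (k:ℝ)*((N:ℝ)/K) - l := by linarith
    have hmkM : ((k*M : ℕ):ℝ) = (k:ℝ)*M := by push_cast; ring
    rw [hmkM, div_mul_eq_mul_div, le_div_iff₀ hd]
    have hid : (M:ℝ)*K*((k:ℝ)*((N:ℝ)/K) - l) = (M:ℝ)*((k:ℝ)*N - K*l) := by
      field_simp
    have h1 : (M:ℝ)*K*((k:ℝ)*((N:ℝ)/K) - l) ≤ (k:ℝ)*(((k:ℝ)*M - l)*((N:ℝ) - l)) := by
      rw [hid]; exact hkey
    have hT : (M:ℝ)*N - (K:ℝ)*M*r = (M:ℝ)*K*((N:ℝ)/K - r) := by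
      field_simp
    calc ((M:ℝ)*N - (K:ℝ)*M*r) * ((k:ℝ)*((N:ℝ)/K) - l)
        = ((M:ℝ)*K*((k:ℝ)*((N:ℝ)/K) - l)) * ((N:ℝ)/K - r) := by rw [hT]; ring
      _ ≤ ((k:ℝ)*(((k:ℝ)*M - l)*((N:ℝ) - l))) * ((N:ℝ)/K - r) :=
          mul_le_mul_of_nonneg_right h1 (by linarith)
      _ = ((k:ℝ)*M - l)*((N:ℝ) - l) * ((k:ℝ)*((N:ℝ)/K) - (k:ℝ)*r) := by ring

theorem stmt8 (M N K : ℕ) (hM : 0 < M) (hN : 0 < N) (hK : 2 ≤ K)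
    (hNK : N < (K - 1) * M + 1)
    (r : ℝ) (hr0 : 0 ≤ r) (hrN : r ≤ (N : ℝ) / (K : ℝ)) :
    sSup {x : ℝ | ∃ D : Fin K → ℝ,
        (∀ i, 0 ≤ D i ∧ D i ≤ (M : ℝ)) ∧
        (∑ i, D i) ≤ min (N : ℝ) ((K : ℝ) * (M : ℝ)) ∧
        x = sInf {y : ℝ | ∃ A : Finset (Fin K), A.Nonempty ∧
              y = dIC (A.card * M) N (∑ a ∈ A, D a) ((A.card : ℝ) * r)}}
      = (M : ℝ) * (N : ℝ) - (K : ℝ) * (M : ℝ) * r := by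
  have hK0n : 0 < K := by omega
  have hK0 : (0:ℝ) < K := by exact_mod_cast hK0n
  have hKne : (K:ℝ) ≠ 0 := ne_of_gt hK0
  have hM1 : (1:ℝ) ≤ M := by exact_mod_cast hM
  have hN1 : (1:ℝ) ≤ N := by exact_mod_cast hN
  have hKq : (K:ℝ)*((N:ℝ)/K) = N := by field_simp
  have hNK' : (N:ℝ) ≤ ((K:ℝ)-1)*(M:ℝ) := by
    have h : N ≤ (K-1)*M := by omega
    have h2 := (Nat.cast_le (α := ℝ)).2 h
    rw [Nat.cast_mul, Nat.cast_sub (show 1 ≤ K by omega)] at h2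
    simpa using h2
  have hid : (K:ℝ)*M*((N:ℝ)/K) = (M:ℝ)*N := by field_simp
  have hT0 : 0 ≤ (M:ℝ)*N - (K:ℝ)*M*r := by
    nlinarith [mul_le_mul_of_nonneg_left hrN (show (0:ℝ) ≤ (K:ℝ)*M by positivity)]
  have hub : ∀ x ∈ {x : ℝ | ∃ D : Fin K → ℝ,
        (∀ i, 0 ≤ D i ∧ D i ≤ (M : ℝ)) ∧
        (∑ i, D i) ≤ min (N : ℝ) ((K : ℝ) * (M : ℝ)) ∧
        x = sInf {y : ℝ | ∃ A : Finset (Fin K), A.Nonempty ∧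
              y = dIC (A.card * M) N (∑ a ∈ A, D a) ((A.card : ℝ) * r)}},
      x ≤ (M:ℝ)*N - (K:ℝ)*M*r := by
    rintro x ⟨D, hDbd, hsum, rfl⟩
    have hex : ∃ i : Fin K, D i ≤ (N:ℝ)/K := by
      by_contra hcon
      push_neg at hcon
      have hlt : ∑ i : Fin K, (N:ℝ)/K < ∑ i, D i :=
        Finset.sum_lt_sum_of_nonempty ⟨⟨0, by omega⟩, Finset.mem_univ _⟩
          (fun i _ => hcon i)
      rw [Finset.sum_const, Finset.card_univ, Fintype.card_fin, nsmul_eq_mul] at hlt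
      have h2 := hsum.trans (min_le_left _ _)
      rw [hKq] at hlt
      linarith
    obtain ⟨i₀, hi₀⟩ := hex
    by_cases hbdd : BddBelow {y : ℝ | ∃ A : Finset (Fin K), A.Nonempty ∧
        y = dIC (A.card * M) N (∑ a ∈ A, D a) ((A.card : ℝ) * r)}
    · have hmemy : dIC M N (D i₀) r ∈ {y : ℝ | ∃ A : Finset (Fin K), A.Nonempty ∧
          y = dIC (A.card * M) N (∑ a ∈ A, D a) ((A.card : ℝ) * r)} := by
        refine ⟨{i₀}, Finset.singleton_nonempty _, ?_⟩
        simp only [Finset.card_singleton, one_mul, Finset.sum_singleton, Nat.cast_one]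
      exact (csInf_le hbdd hmemy).trans
        (single_ub M N K hM hN hK0n hNK' r (D i₀) hr0 hi₀ hT0)
    · rw [Real.sInf_of_not_bddBelow hbdd]
      exact hT0
  apply le_antisymm
  · exact Real.sSup_le hub hT0
  · apply le_csSup ⟨_, fun x hx => hub x hx⟩
    refine ⟨fun _ => (N:ℝ)/K, fun i => ⟨by positivity, ?_⟩, ?_, ?_⟩
    · rw [div_le_iff₀ hK0]
      nlinarith
    · rw [Finset.sum_const, Finset.card_univ, Fintype.card_fin, nsmul_eq_mul, hKq]
      exact le_min (le_refl _) (by nlinarith)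
    · have hlb : ∀ y ∈ {y : ℝ | ∃ A : Finset (Fin K), A.Nonempty ∧
          y = dIC (A.card * M) N (∑ a ∈ A, (fun _ => (N:ℝ)/K) a) ((A.card : ℝ) * r)},
          (M:ℝ)*N - (K:ℝ)*M*r ≤ y := by
        rintro y ⟨A, hA, rfl⟩
        have hcard1 : 1 ≤ A.card := hA.card_pos
        have hcardK : A.card ≤ K := le_trans (Finset.card_le_univ A) (by simp)
        have hsumA : ∑ a ∈ A, (N:ℝ)/K = (A.card:ℝ)*((N:ℝ)/K) := by
          rw [Finset.sum_const, nsmul_eq_mul]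
        simp only [hsumA]
        exact main_lb M N K A.card hM hN hK hcard1 hcardK hNK' r hr0 hrN
      have hTmem : (M:ℝ)*N - (K:ℝ)*M*r ∈ {y : ℝ | ∃ A : Finset (Fin K), A.Nonempty ∧
          y = dIC (A.card * M) N (∑ a ∈ A, (fun _ => (N:ℝ)/K) a) ((A.card : ℝ) * r)} := by
        refine ⟨{⟨0, by omega⟩}, Finset.singleton_nonempty _, ?_⟩
        simp only [Finset.card_singleton, one_mul, Finset.sum_singleton, Nat.cast_one]
        exact (single_eq M N K hM hN hK0n hNK' r hr0 hrN).symm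
      exact (le_antisymm (csInf_le ⟨_, fun y hy => hlb y hy⟩ hTmem)
        (le_csInf ⟨_, hTmem⟩ hlb)).symm
end

section
/- Let s ≥ 1 be an integer and set K = 2, M = s+1, N = 3s, L = min(3s, 2(s+1)). Then for every real r with 0 ≤ r ≤ L/2, the supremum over pairs (D_1, D_2) of reals with 0 ≤ D_1 ≤ s+1, 0 ≤ D_2 ≤ s+1, and D_1+D_2 ≤ L, of min( d^{D_1}_{s+1,3s}(r), d^{D_2}_{s+1,3s}(r), d^{D_1+D_2}_{2(s+1),3s}(2r) ), equals d^{FC}_{2,s+1,3s}(r). -/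
/-- `dFC M N` has slope `-dFCSlope M N k` on `[k, k + 1]`. -/
def dFCSlope (M N k : ℕ) : ℝ := (N : ℝ) + M - 1 - 2 * k

/-- `lIdx M N D` is, definitionally, the least `l` with `D ≤ lIdxBound M N l`. -/
noncomputable def lIdxBound (M N k : ℕ) : ℝ := ((M : ℝ) * N - k * (k + 1)) / dFCSlope M N k

def dFCLine (M N k : ℕ) (r : ℝ) : ℝ := (M : ℝ) * N - k * (k + 1) - r * dFCSlope M N k

section Breakpoints

variable {M N j k : ℕ} {D r : ℝ}

theorem lIdx_le (h : D ≤ lIdxBound M N k) : lIdx M N D ≤ k := Nat.sInf_le h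

theorem le_lIdxBound_lIdx (h : D ≤ lIdxBound M N k) : D ≤ lIdxBound M N (lIdx M N D) :=
  Nat.sInf_mem (s := {l : ℕ | D ≤ lIdxBound M N l}) ⟨k, h⟩

theorem lIdxBound_lt_of_lt_lIdx (h : k < lIdx M N D) : lIdxBound M N k < D :=
  not_le.1 (Nat.notMem_of_lt_sInf h)

theorem dFCSlope_pos (hk : k + 1 ≤ min M N) : 0 < dFCSlope M N k := by
  have hM : (k : ℝ) + 1 ≤ M := by exact_mod_cast hk.trans (min_le_left M N)
  have hN : (k : ℝ) + 1 ≤ N := by exact_mod_cast hk.trans (min_le_right M N)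
  rw [dFCSlope]; linarith

theorem dFCSlope_anti (hjk : j ≤ k) : dFCSlope M N k ≤ dFCSlope M N j := by
  have : (j : ℝ) ≤ k := by exact_mod_cast hjk
  rw [dFCSlope, dFCSlope]; linarith

theorem le_lIdxBound_iff (hk : k + 1 ≤ min M N) :
    D ≤ lIdxBound M N k ↔ dFCSlope M N k * (D - k) ≤ (M - k) * (N - k) := by
  rw [lIdxBound, le_div_iff₀ (dFCSlope_pos hk), dFCSlope]
  constructor <;> intro h <;> linarith

theorem lIdxBound_lt_iff (hk : k + 1 ≤ min M N) :
    lIdxBound M N k < D ↔ (M - k) * (N - k) < dFCSlope M N k * (D - k) := by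
  rw [← not_le, le_lIdxBound_iff hk, not_le]

theorem succ_le_lIdxBound (hk : k + 1 ≤ min M N) : (k : ℝ) + 1 ≤ lIdxBound M N k := by
  have hM : (k : ℝ) + 1 ≤ M := by exact_mod_cast hk.trans (min_le_left M N)
  have hN : (k : ℝ) + 1 ≤ N := by exact_mod_cast hk.trans (min_le_right M N)
  rw [le_lIdxBound_iff hk, dFCSlope]
  nlinarith [mul_nonneg (sub_nonneg.2 hM) (sub_nonneg.2 hN)]

theorem lIdxBound_lt_lIdxBound_succ (hk : k + 2 ≤ min M N) :
    lIdxBound M N k < lIdxBound M N (k + 1) := by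
  have hM : (k : ℝ) + 2 ≤ M := by exact_mod_cast hk.trans (min_le_left M N)
  have hN : (k : ℝ) + 2 ≤ N := by exact_mod_cast hk.trans (min_le_right M N)
  rw [lIdxBound, lIdxBound, div_lt_div_iff₀ (dFCSlope_pos (by omega)) (dFCSlope_pos hk),
    dFCSlope, dFCSlope]
  push_cast
  nlinarith [mul_pos (show (0 : ℝ) < M - k - 1 by linarith) (show (0 : ℝ) < N - k - 1 by linarith)]

theorem lIdxBound_mono (hjk : j ≤ k) (hk : k + 1 ≤ min M N) :
    lIdxBound M N j ≤ lIdxBound M N k := by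
  induction k, hjk using Nat.le_induction with
  | base => exact le_rfl
  | succ k _ ih => exact (ih (by omega)).trans (lIdxBound_lt_lIdxBound_succ hk).le

theorem lIdxBound_of_succ_eq_min (h : k + 1 = min M N) : lIdxBound M N k = k + 1 := by
  rw [lIdxBound, div_eq_iff (dFCSlope_pos h.le).ne', dFCSlope]
  rcases le_total M N with hMN | hMN
  · have hM : (M : ℝ) = k + 1 := by exact_mod_cast (h.trans (min_eq_left hMN)).symm
    rw [hM]; ring
  · have hN : (N : ℝ) = k + 1 := by exact_mod_cast (h.trans (min_eq_right hMN)).symm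
    rw [hN]; ring

theorem lIdxBound_le_min (hk : k + 1 ≤ min M N) : lIdxBound M N k ≤ (min M N : ℕ) := by
  obtain ⟨m, hm⟩ : ∃ m, m + 1 = min M N := ⟨min M N - 1, by omega⟩
  calc lIdxBound M N k ≤ lIdxBound M N m := lIdxBound_mono (by omega) hm.le
    _ = (min M N : ℕ) := by rw [lIdxBound_of_succ_eq_min hm, ← hm]; push_cast; ring

theorem lIdx_spec (hj : j + 1 ≤ min M N) (hD : D ≤ lIdxBound M N j) (hD0 : 0 < D) :
    lIdx M N D ≤ j ∧ D ≤ lIdxBound M N (lIdx M N D) ∧ (lIdx M N D : ℝ) < D := by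
  refine ⟨lIdx_le hD, le_lIdxBound_lIdx hD, ?_⟩
  rcases Nat.eq_zero_or_pos (lIdx M N D) with h | h
  · rw [h]; exact_mod_cast hD0
  · obtain ⟨i, h⟩ := Nat.exists_eq_add_one_of_ne_zero h.ne'
    have hlt : lIdxBound M N i < D := lIdxBound_lt_of_lt_lIdx (by omega)
    have hle : (i : ℝ) + 1 ≤ lIdxBound M N i := succ_le_lIdxBound (by have := lIdx_le hD; omega)
    rw [h]; push_cast; linarith

end Breakpoints

section Lines

variable {M N j k : ℕ} {r : ℝ}

theorem dFCLine_le_dFCLine (hk : k ≤ r) (hk' : r ≤ k + 1) : dFCLine M N j r ≤ dFCLine M N k r := by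
  have key : dFCLine M N k r - dFCLine M N j r = (k - j) * (2 * r - j - k - 1) := by
    simp only [dFCLine, dFCSlope]; ring
  rcases lt_trichotomy j k with h | rfl | h
  · have : (j : ℝ) + 1 ≤ k := by exact_mod_cast h
    nlinarith
  · exact le_rfl
  · have : (k : ℝ) + 1 ≤ j := by exact_mod_cast h
    nlinarith

theorem dFC_eq_dFCLine (hk : k ≤ r) (hk' : r ≤ k + 1) : dFC M N r = dFCLine M N k r := by
  rcases hk'.lt_or_eq with h | h
  · have hfl : ⌊r⌋ = k := by rw [Int.floor_eq_iff]; push_cast; exact ⟨hk, h⟩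
    rw [dFC, dFCLine, dFCSlope, hfl]; push_cast; ring
  · have hfl : ⌊r⌋ = k + 1 := by rw [h]; exact_mod_cast Int.floor_natCast (k + 1)
    rw [dFC, dFCLine, dFCSlope, hfl, h]; push_cast; ring

theorem dFCLine_le_dFC (j : ℕ) (hr : 0 ≤ r) : dFCLine M N j r ≤ dFC M N r := by
  rw [dFC_eq_dFCLine (Nat.floor_le hr) (Nat.lt_floor_add_one r).le]
  exact dFCLine_le_dFCLine (Nat.floor_le hr) (Nat.lt_floor_add_one r).le

theorem dFCLine_eq_sub (M N k : ℕ) (r : ℝ) :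
    dFCLine M N k r = (M - k) * (N - k) - dFCSlope M N k * (r - k) := by
  simp only [dFCLine, dFCSlope]; ring

theorem dFCLine_eq_mul (hk : k + 1 ≤ min M N) (r : ℝ) :
    dFCLine M N k r = dFCSlope M N k * (lIdxBound M N k - r) := by
  rw [lIdxBound, mul_sub, mul_div_cancel₀ _ (dFCSlope_pos hk).ne', dFCLine]; ring

theorem exists_nat_le_le_succ {m : ℕ} (hm : 0 < m) (hr : 0 ≤ r) (hrm : r ≤ m) :
    ∃ k : ℕ, k + 1 ≤ m ∧ (k : ℝ) ≤ r ∧ r ≤ k + 1 := by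
  rcases hrm.lt_or_eq with h | h
  · exact ⟨⌊r⌋₊, (Nat.floor_lt hr).2 h, Nat.floor_le hr, (Nat.lt_floor_add_one r).le⟩
  · refine ⟨m - 1, by omega, ?_, ?_⟩ <;> rw [h, Nat.cast_pred hm] <;> linarith

theorem dFC_nonneg (hr : 0 ≤ r) (hrm : r ≤ (min M N : ℕ)) : 0 ≤ dFC M N r := by
  rcases Nat.eq_zero_or_pos (min M N) with hm | hm
  · have hr0 : r = 0 := by rw [hm] at hrm; push_cast at hrm; linarith
    simp only [dFC, hr0, Int.floor_zero, Int.cast_zero, sub_zero, zero_mul, add_zero]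
    positivity
  obtain ⟨k, hkm, hk, hk'⟩ := exists_nat_le_le_succ hm hr hrm
  have hM : (k : ℝ) + 1 ≤ M := by exact_mod_cast hkm.trans (min_le_left M N)
  have hN : (k : ℝ) + 1 ≤ N := by exact_mod_cast hkm.trans (min_le_right M N)
  rw [dFC_eq_dFCLine hk hk', dFCLine_eq_sub, dFCSlope]
  nlinarith [mul_nonneg (mul_nonneg (sub_nonneg.2 hk') (sub_nonneg.2 hM)) (sub_nonneg.2 hN),
    mul_nonneg (mul_nonneg (sub_nonneg.2 hk) (sub_nonneg.2 hM)) (sub_nonneg.2 hN)]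

end Lines

section InfiniteConstellations

variable {M N j : ℕ} {D r : ℝ}

theorem dFCSlope_mul_sub_le_dIC (hj : j + 1 ≤ min M N) (hr : 0 ≤ r) (hrD : r ≤ D)
    (hD : D ≤ lIdxBound M N j) : dFCSlope M N j * (D - r) ≤ dIC M N D r := by
  rw [dIC]
  split_ifs with h
  · have : D - r = 0 := by rcases h with h | h <;> linarith
    rw [this, mul_zero]
  push Not at h
  obtain ⟨hlj, hDl, hlD⟩ := lIdx_spec hj hD h.1
  have hl : lIdx M N D + 1 ≤ min M N := by omega
  refine mul_le_mul_of_nonneg_right ?_ (by linarith)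
  calc dFCSlope M N j ≤ dFCSlope M N (lIdx M N D) := dFCSlope_anti hlj
    _ ≤ _ := by rw [le_div_iff₀ (by linarith)]; exact (le_lIdxBound_iff hl).1 hDl

theorem dIC_le_dFC (hr : 0 ≤ r) (hrm : r ≤ (min M N : ℕ)) (hDm : D ≤ (min M N : ℕ)) :
    dIC M N D r ≤ dFC M N r := by
  rw [dIC]
  split_ifs with h
  · exact dFC_nonneg hr hrm
  push Not at h
  obtain ⟨hD0, -⟩ := h
  obtain ⟨m, hm⟩ : ∃ m, m + 1 = min M N :=
    ⟨min M N - 1, Nat.sub_add_cancel (by exact_mod_cast hD0.trans_le hDm)⟩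
  have hDm' : D ≤ lIdxBound M N m := by
    rw [lIdxBound_of_succ_eq_min hm]; rw [← hm] at hDm; exact_mod_cast hDm
  obtain ⟨hlm, hDl, hlD⟩ := lIdx_spec hm.le hDm' hD0
  set l := lIdx M N D
  have hl : l + 1 ≤ min M N := by omega
  rw [div_mul_eq_mul_div, div_le_iff₀ (sub_pos.2 hlD)]
  rcases le_or_gt (l : ℝ) r with hlr | hrl
  · have key := (le_lIdxBound_iff hl).1 hDl
    calc (M - l) * (N - l) * (D - r) ≤ dFCLine M N l r * (D - l) := by
          rw [dFCLine_eq_sub]; nlinarith [mul_nonneg (sub_nonneg.2 hlr) (sub_nonneg.2 key)]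
      _ ≤ dFC M N r * (D - l) :=
          mul_le_mul_of_nonneg_right (dFCLine_le_dFC l hr) (sub_pos.2 hlD).le
  · obtain ⟨i, hi⟩ := Nat.exists_eq_add_one_of_ne_zero (n := l) (by
      rintro h; rw [h] at hrl; push_cast at hrl; linarith)
    have key := (lIdxBound_lt_iff (by omega : i + 1 ≤ min M N)).1
      (lIdxBound_lt_of_lt_lIdx (by omega : i < l))
    have hli : (l : ℝ) = i + 1 := by exact_mod_cast hi
    have key' : (M - l) * (N - l) ≤ dFCSlope M N i * (D - l) := by
      rw [hli]; rw [dFCSlope] at key ⊢; linarith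
    have hline : dFCLine M N i r = (M - l) * (N - l) - dFCSlope M N i * (r - l) := by
      rw [dFCLine_eq_sub, hli, dFCSlope]; ring
    calc (M - l) * (N - l) * (D - r) ≤ dFCLine M N i r * (D - l) := by
          rw [hline]; nlinarith [mul_le_mul_of_nonneg_right key' (sub_nonneg.2 hrl.le)]
      _ ≤ dFC M N r * (D - l) :=
          mul_le_mul_of_nonneg_right (dFCLine_le_dFC i hr) (sub_pos.2 hlD).le

end InfiniteConstellations

section Symmetric

variable {s k : ℕ} {r : ℝ}

theorem dFCmac_two_succ_three_mul (s : ℕ) (r : ℝ) :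
    dFCmac 2 (s + 1) (3 * s) r =
      if r ≤ s then dFC (s + 1) (3 * s) r else dFC (2 * (s + 1)) (3 * s) (2 * r) := by
  have hmin : min (((3 * s : ℕ) : ℝ) / ((2 : ℕ) + 1)) ((s + 1 : ℕ) : ℝ) = s := by
    push_cast; rw [min_eq_left (by linarith)]; ring
  rw [dFCmac, hmin]; push_cast; rfl

theorem two_mul_lIdxBound_le (hk : k + 1 ≤ s) :
    2 * lIdxBound (s + 1) (3 * s) k ≤ lIdxBound (2 * (s + 1)) (3 * s) ((3 * s + k + 1) / 2) := by
  set j := (3 * s + k + 1) / 2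
  have hS : (k : ℝ) + 1 ≤ s := by exact_mod_cast hk
  have hk0 : (0 : ℝ) ≤ k := Nat.cast_nonneg k
  have hden : 0 < dFCSlope (s + 1) (3 * s) k := dFCSlope_pos (by omega)
  rw [lIdxBound, lIdxBound, mul_div_assoc', div_le_div_iff₀ hden (dFCSlope_pos (by omega))]
  simp only [dFCSlope] at hden ⊢
  push_cast at hden ⊢
  -- `j = ⌈(3s + k)/2⌉`; the bound needs `2j > 3s + k` when `s - k = 1`, which parity guarantees
  rcases (by omega : 2 * j = 3 * s + k + 1 ∨ (2 * j = 3 * s + k ∧ k + 2 ≤ s)) with h | ⟨h, hk2⟩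
  · have hj : (j : ℝ) = (3 * s + k + 1) / 2 := by
      have : ((2 * j : ℕ) : ℝ) = ((3 * s + k + 1 : ℕ) : ℝ) := by rw [h]
      push_cast at this; linarith
    rw [hj]
    nlinarith [mul_nonneg (mul_nonneg (by linarith : (0 : ℝ) ≤ 2 * s - k)
      (by linarith : (0 : ℝ) ≤ s - k - 1)) (by linarith : (0 : ℝ) ≤ s - k + 1)]
  · have hj : (j : ℝ) = (3 * s + k) / 2 := by
      have : ((2 * j : ℕ) : ℝ) = ((3 * s + k : ℕ) : ℝ) := by rw [h]
      push_cast at this; linarith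
    have hS2 : (k : ℝ) + 2 ≤ s := by exact_mod_cast hk2
    rw [hj]
    nlinarith [mul_nonneg (mul_nonneg hk0 (by linarith : (0 : ℝ) ≤ 3 * (s - k) + 4))
        (by linarith : (0 : ℝ) ≤ s - k - 2),
      mul_nonneg (by linarith : (0 : ℝ) ≤ s - k) (by nlinarith : (0 : ℝ) ≤ 3 * (s - k) ^ 2 - 12),
      pow_nonneg (by linarith : (0 : ℝ) ≤ s - k) 3]

theorem lIdxBound_two_mul (hs : 1 ≤ s) :
    lIdxBound (2 * (s + 1)) (3 * s) (2 * s) = 2 * lIdxBound (s + 1) (3 * s) (s - 1) := by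
  have hS : (1 : ℝ) ≤ s := by exact_mod_cast hs
  rw [lIdxBound, lIdxBound, dFCSlope, dFCSlope, Nat.cast_pred hs]
  push_cast
  rw [mul_div_assoc', div_eq_div_iff (by linarith) (by linarith)]
  ring

theorem exists_dFC_le_dIC_of_le (hs : 1 ≤ s) (hr : 0 ≤ r) (hrs : r ≤ s) :
    ∃ D : ℝ, 0 ≤ D ∧ D ≤ s + 1 ∧ D + D ≤ ((min (3 * s) (2 * (s + 1)) : ℕ) : ℝ) ∧
      dFC (s + 1) (3 * s) r ≤ dIC (s + 1) (3 * s) D r ∧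
      dFC (s + 1) (3 * s) r ≤ dIC (2 * (s + 1)) (3 * s) (D + D) (2 * r) := by
  obtain ⟨k, hks, hk, hk'⟩ := exists_nat_le_le_succ hs hr hrs
  set D := lIdxBound (s + 1) (3 * s) k
  set j := (3 * s + k + 1) / 2
  have hk1 : k + 1 ≤ min (s + 1) (3 * s) := by omega
  have hj1 : j + 1 ≤ min (2 * (s + 1)) (3 * s) := by omega
  have hrD : r ≤ D := hk'.trans (succ_le_lIdxBound hk1)
  have h2D : D + D ≤ lIdxBound (2 * (s + 1)) (3 * s) j := by
    rw [← two_mul]; exact two_mul_lIdxBound_le hks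
  have hV : dFC (s + 1) (3 * s) r = dFCSlope (s + 1) (3 * s) k * (D - r) := by
    rw [dFC_eq_dFCLine hk hk', dFCLine_eq_mul hk1]
  have hslope : dFCSlope (s + 1) (3 * s) k ≤ 2 * dFCSlope (2 * (s + 1)) (3 * s) j := by
    have : 2 * (j : ℝ) ≤ 3 * s + k + 1 := by exact_mod_cast (by omega : 2 * j ≤ 3 * s + k + 1)
    simp only [dFCSlope]; push_cast; linarith
  refine ⟨D, by linarith, ?_, ?_, ?_, ?_⟩
  · have := lIdxBound_le_min hk1
    rwa [show min (s + 1) (3 * s) = s + 1 by omega, Nat.cast_succ] at this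
  · rw [Nat.min_comm]; exact h2D.trans (lIdxBound_le_min hj1)
  · rw [hV]; exact dFCSlope_mul_sub_le_dIC hk1 hr hrD le_rfl
  · calc dFC (s + 1) (3 * s) r ≤ dFCSlope (2 * (s + 1)) (3 * s) j * (D + D - 2 * r) := by
          rw [hV]; nlinarith
      _ ≤ _ := dFCSlope_mul_sub_le_dIC hj1 (by linarith) (by linarith) h2D

theorem exists_dFC_two_mul_le_dIC_of_lt_of_le (hs : 1 ≤ s) (hsr : s < r)
    (hr : 2 * r ≤ 2 * s + 1) :
    ∃ D : ℝ, 0 ≤ D ∧ D ≤ s + 1 ∧ D + D ≤ ((min (3 * s) (2 * (s + 1)) : ℕ) : ℝ) ∧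
      dFC (2 * (s + 1)) (3 * s) (2 * r) ≤ dIC (s + 1) (3 * s) D r ∧
      dFC (2 * (s + 1)) (3 * s) (2 * r) ≤ dIC (2 * (s + 1)) (3 * s) (D + D) (2 * r) := by
  set D := lIdxBound (s + 1) (3 * s) (s - 1)
  have hk1 : s - 1 + 1 ≤ min (s + 1) (3 * s) := by omega
  have hk2 : 2 * s + 1 ≤ min (2 * (s + 1)) (3 * s) := by omega
  have hD2 : lIdxBound (2 * (s + 1)) (3 * s) (2 * s) = D + D := by
    rw [lIdxBound_two_mul hs]; ring
  have hrD : 2 * r ≤ D + D := by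
    have := succ_le_lIdxBound hk2; push_cast at this; linarith
  have hV : dFC (2 * (s + 1)) (3 * s) (2 * r) =
      dFCSlope (2 * (s + 1)) (3 * s) (2 * s) * (D + D - 2 * r) := by
    rw [dFC_eq_dFCLine (k := 2 * s) (by push_cast; linarith) (by push_cast; linarith),
      dFCLine_eq_mul hk2, hD2]
  refine ⟨D, by linarith [succ_le_lIdxBound hk1], ?_, ?_, ?_, ?_⟩
  · have := lIdxBound_le_min hk1
    rwa [show min (s + 1) (3 * s) = s + 1 by omega, Nat.cast_succ] at this
  · rw [Nat.min_comm, ← hD2]; exact lIdxBound_le_min hk2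
  · calc dFC (2 * (s + 1)) (3 * s) (2 * r) = dFCSlope (s + 1) (3 * s) (s - 1) * (D - r) := by
          rw [hV]; simp only [dFCSlope]; push_cast [hs]; ring
      _ ≤ _ := dFCSlope_mul_sub_le_dIC hk1 (by linarith) (by linarith) le_rfl
  · rw [hV]; exact dFCSlope_mul_sub_le_dIC hk2 (by linarith) hrD hD2.ge

theorem exists_dFC_two_mul_le_dIC_of_lt (hsr : 2 * s + 1 < 2 * r)
    (hrL : 2 * r ≤ ((min (3 * s) (2 * (s + 1)) : ℕ) : ℝ)) :
    ∃ D : ℝ, 0 ≤ D ∧ D ≤ s + 1 ∧ D + D ≤ ((min (3 * s) (2 * (s + 1)) : ℕ) : ℝ) ∧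
      dFC (2 * (s + 1)) (3 * s) (2 * r) ≤ dIC (s + 1) (3 * s) D r ∧
      dFC (2 * (s + 1)) (3 * s) (2 * r) ≤ dIC (2 * (s + 1)) (3 * s) (D + D) (2 * r) := by
  have hL : ((min (3 * s) (2 * (s + 1)) : ℕ) : ℝ) = min (3 * (s : ℝ)) (2 * s + 2) := by
    push_cast; ring_nf
  rw [hL] at hrL ⊢
  have hs2 : 2 ≤ s := by
    have : (2 * s + 1 : ℝ) < 3 * s := hsr.trans_le (hrL.trans (min_le_left _ _))
    exact_mod_cast (by linarith : (1 : ℝ) < s)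
  have hk2 : 2 * s + 1 + 1 = min (2 * (s + 1)) (3 * s) := by omega
  have hD : lIdxBound (s + 1) (3 * s) s = s + 1 := lIdxBound_of_succ_eq_min (by omega)
  have hD2 : lIdxBound (2 * (s + 1)) (3 * s) (2 * s + 1) = (s + 1) + (s + 1) := by
    rw [lIdxBound_of_succ_eq_min hk2]; push_cast; ring
  have hV : dFC (2 * (s + 1)) (3 * s) (2 * r) =
      dFCSlope (2 * (s + 1)) (3 * s) (2 * s + 1) * ((s + 1) + (s + 1) - 2 * r) := by
    rw [dFC_eq_dFCLine (k := 2 * s + 1) (by push_cast; linarith)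
        (by push_cast; linarith [min_le_right (3 * (s : ℝ)) (2 * s + 2)]),
      dFCLine_eq_mul hk2.le, hD2]
  have hrs : r ≤ s + 1 := by linarith [min_le_right (3 * (s : ℝ)) (2 * s + 2)]
  refine ⟨s + 1, by positivity, le_rfl, ?_, ?_, ?_⟩
  · rw [min_eq_right (by exact_mod_cast (by omega : 2 * s + 2 ≤ 3 * s))]; linarith
  · calc dFC (2 * (s + 1)) (3 * s) (2 * r) ≤ dFCSlope (s + 1) (3 * s) s * ((s + 1) - r) := by
          rw [hV]; simp only [dFCSlope]; push_cast; nlinarith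
      _ ≤ _ := dFCSlope_mul_sub_le_dIC (by omega) (by linarith) hrs hD.ge
  · rw [hV]; exact dFCSlope_mul_sub_le_dIC hk2.le (by linarith) (by linarith) hD2.ge

theorem exists_dFCmac_le_dIC (hs : 1 ≤ s) (hr : 0 ≤ r)
    (hrL : r ≤ ((min (3 * s) (2 * (s + 1)) : ℕ) : ℝ) / 2) :
    ∃ D : ℝ, 0 ≤ D ∧ D ≤ s + 1 ∧ D + D ≤ ((min (3 * s) (2 * (s + 1)) : ℕ) : ℝ) ∧
      dFCmac 2 (s + 1) (3 * s) r ≤ dIC (s + 1) (3 * s) D r ∧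
      dFCmac 2 (s + 1) (3 * s) r ≤ dIC (2 * (s + 1)) (3 * s) (D + D) (2 * r) := by
  rw [dFCmac_two_succ_three_mul]
  split_ifs with hrs
  · exact exists_dFC_le_dIC_of_le hs hr hrs
  · rcases le_or_gt (2 * r) (2 * s + 1) with h | h
    · exact exists_dFC_two_mul_le_dIC_of_lt_of_le hs (not_le.1 hrs) h
    · exact exists_dFC_two_mul_le_dIC_of_lt h (by linarith)

theorem min_dIC_le_dFCmac {D₁ D₂ : ℝ} (hr : 0 ≤ r)
    (hrL : r ≤ ((min (3 * s) (2 * (s + 1)) : ℕ) : ℝ) / 2) (hD₁ : D₁ ≤ s + 1) (hD₂ : 0 ≤ D₂)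
    (hD : D₁ + D₂ ≤ ((min (3 * s) (2 * (s + 1)) : ℕ) : ℝ)) :
    min (min (dIC (s + 1) (3 * s) D₁ r) (dIC (s + 1) (3 * s) D₂ r))
        (dIC (2 * (s + 1)) (3 * s) (D₁ + D₂) (2 * r)) ≤ dFCmac 2 (s + 1) (3 * s) r := by
  rw [dFCmac_two_succ_three_mul]
  split_ifs with hrs
  · have hL : ((min (3 * s) (2 * (s + 1)) : ℕ) : ℝ) ≤ 3 * s := by push_cast; exact min_le_left _ _
    refine (min_le_left _ _).trans ((min_le_left _ _).trans (dIC_le_dFC hr ?_ ?_)) <;>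
      push_cast <;> refine le_min ?_ ?_ <;> linarith
  · refine (min_le_right _ _).trans (dIC_le_dFC (by linarith) ?_ ?_) <;>
      rw [Nat.min_comm] <;> linarith

end Symmetric

theorem stmt12 (s : ℕ) (hs : 1 ≤ s) (r : ℝ) (hr0 : 0 ≤ r)
    (hrL : r ≤ ((min (3 * s) (2 * (s + 1)) : ℕ) : ℝ) / 2) :
    sSup {x : ℝ | ∃ D₁ D₂ : ℝ,
        0 ≤ D₁ ∧ D₁ ≤ (s : ℝ) + 1 ∧ 0 ≤ D₂ ∧ D₂ ≤ (s : ℝ) + 1 ∧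
        D₁ + D₂ ≤ ((min (3 * s) (2 * (s + 1)) : ℕ) : ℝ) ∧
        x = min (min (dIC (s + 1) (3 * s) D₁ r) (dIC (s + 1) (3 * s) D₂ r))
              (dIC (2 * (s + 1)) (3 * s) (D₁ + D₂) (2 * r))}
      = dFCmac 2 (s + 1) (3 * s) r := by
  obtain ⟨D, hD0, hDs, hDL, hV₁, hV₂⟩ := exists_dFCmac_le_dIC hs hr0 hrL
  refine le_antisymm (csSup_le ⟨_, D, D, hD0, hDs, hD0, hDs, hDL, rfl⟩ ?ub)
    (le_csSup_of_le ⟨_, ?ub⟩ ⟨D, D, hD0, hDs, hD0, hDs, hDL, rfl⟩ (le_min (le_min hV₁ hV₁) hV₂))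
  rintro x ⟨D₁, D₂, -, hD₁, hD₂, -, hD, rfl⟩
  exact min_dIC_le_dFCmac hr0 hrL hD₁ hD₂ hD
end
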